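/- Let G be a finite group with d(G) ≥ 2 and suppose Cyc(G) ≠ 1 and G is 2-flexible. Then G is not 1-flexible. -/

import Mathlib

/-!
Take `1 ≠ c ∈ Cyc(G)`. By 1-flexibility `c` extends to a generating set `c, y₁, …, y_{d-1}`,
and since `d ≥ 2` there is some `y₁`. As `⟨c, y₁⟩` is cyclic, replacing `c` and `y₁` by a
single generator `z` of it still generates `G`, leaving a generating set of size `d - 1`.
-/

noncomputable def dG (G : Type*) [Group G] : ℕ :=
  sInf {n | ∃ s : Finset G, s.card = n ∧ Subgroup.closure (s : Set G) = ⊤}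

def Flexible (G : Type*) [Group G] (k : ℕ) : Prop :=
  ∀ x : Fin k → G, dG ↥(Subgroup.closure (Set.range x)) = k →
    ∃ y : Fin (dG G - k) → G, Subgroup.closure (Set.range x ∪ Set.range y) = ⊤

open Subgroup (zpowers zpowers_eq_closure)

section dG

variable {G : Type*} [Group G]

lemma dG_le_card {s : Finset G} (hs : Subgroup.closure (s : Set G) = ⊤) : dG G ≤ s.card :=
  Nat.sInf_le ⟨s, rfl, hs⟩

lemma dG_pos_of_exists_closure_eq_top [Nontrivial G]
    (h : ∃ s : Finset G, Subgroup.closure (s : Set G) = ⊤) : 0 < dG G := by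
  have hsizes : {n | ∃ s : Finset G, s.card = n ∧ Subgroup.closure (s : Set G) = ⊤}.Nonempty :=
    h.elim fun s hs => ⟨s.card, s, rfl, hs⟩
  obtain ⟨s, hcard, hs⟩ := Nat.sInf_mem hsizes
  rw [dG, ← hcard, Finset.card_pos]
  by_contra hempty
  rw [Finset.not_nonempty_iff_eq_empty.mp hempty, Finset.coe_empty, Subgroup.closure_empty] at hs
  exact bot_ne_top hs

lemma dG_eq_one [Nontrivial G] [IsCyclic G] : dG G = 1 := by
  obtain ⟨g, hg⟩ := IsCyclic.exists_generator (α := G)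
  have hgen : Subgroup.closure (({g} : Finset G) : Set G) = ⊤ := by
    rw [Finset.coe_singleton, ← zpowers_eq_closure, eq_top_iff]
    exact fun x _ => hg x
  have := dG_pos_of_exists_closure_eq_top ⟨_, hgen⟩
  have := dG_le_card hgen
  rw [Finset.card_singleton] at this
  omega

lemma dG_closure_singleton {c : G} (hc : c ≠ 1) : dG (Subgroup.closure ({c} : Set G)) = 1 := by
  rw [← zpowers_eq_closure]
  have : Nontrivial (zpowers c) :=
    (Subgroup.nontrivial_iff_ne_bot _).mpr (Subgroup.zpowers_ne_bot.mpr hc)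
  exact dG_eq_one

lemma closure_insert_insert_eq_of_closure_pair_eq_zpowers {a b z : G} (s : Set G)
    (hz : zpowers z = Subgroup.closure {a, b}) :
    Subgroup.closure (insert a (insert b s)) = Subgroup.closure (insert z s) := by
  have hpair : insert a (insert b s) = {a, b} ∪ s := by simp [Set.insert_union]
  rw [hpair, Subgroup.closure_union, ← hz, zpowers_eq_closure, ← Subgroup.closure_union,
    Set.singleton_union]

lemma dG_le_card_add_one_of_isCyclic_closure_pair [DecidableEq G] {a b : G} {s : Finset G}
    (hab : IsCyclic (Subgroup.closure ({a, b} : Set G)))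
    (hs : Subgroup.closure (insert a (insert b (s : Set G))) = ⊤) : dG G ≤ s.card + 1 := by
  obtain ⟨z, hz⟩ := (Subgroup.isCyclic_iff_exists_zpowers_eq_top _).mp hab
  rw [closure_insert_insert_eq_of_closure_pair_eq_zpowers _ hz, ← Finset.coe_insert] at hs
  exact (dG_le_card hs).trans (Finset.card_insert_le z s)

end dG

theorem not_one_flexible_of_cycliciser_nontrivial_general (G : Type*) [Group G]
    (hd : 2 ≤ dG G)
    (N : Subgroup G)
    (hN : ∀ c : G, c ∈ N ↔ ∀ g : G, IsCyclic ↥(Subgroup.closure {c, g}))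
    (hne : N ≠ ⊥) :
    ¬ Flexible G 1 := by
  classical
  intro h1
  obtain ⟨⟨c, hcN⟩, hc⟩ := Subgroup.ne_bot_iff_exists_ne_one.mp hne
  obtain ⟨y, hy⟩ := h1 (fun _ => c)
    (by rw [Set.range_const]; exact dG_closure_singleton (by simpa using hc))
  set b := y ⟨0, by omega⟩
  set s := (Finset.univ.image y).erase b
  have hb : b ∈ Finset.univ.image y := Finset.mem_image_of_mem y (Finset.mem_univ _)
  have hgen : Subgroup.closure (insert c (insert b (s : Set G))) = ⊤ := by
    rw [← Finset.coe_insert, Finset.insert_erase hb]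
    simpa [Set.range_const, Set.singleton_union] using hy
  have hcard : s.card + 1 ≤ dG G - 1 := by
    rw [Finset.card_erase_add_one hb]
    exact Finset.card_image_le.trans_eq (by simp)
  have := dG_le_card_add_one_of_isCyclic_closure_pair ((hN c).mp hcN b) hgen
  omega

theorem not_one_flexible_of_cycliciser_nontrivial (G : Type*) [Group G] [Finite G]
    (hd : 2 ≤ dG G)
    (N : Subgroup G) [N.Normal]
    (hN : ∀ c : G, c ∈ N ↔ ∀ g : G, IsCyclic ↥(Subgroup.closure {c, g}))
    (hne : N ≠ ⊥) (h2 : Flexible G 2) :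
    ¬ Flexible G 1 :=
  not_one_flexible_of_cycliciser_nontrivial_general G hd N hN hne
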